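/- Let p ≥ 2 be an integer, c_M ≠ 0, and k_i = 12/(i(p−i)c_M) for 1 ≤ i ≤ p−1. Define recursively g_1 = k_1·x_1 and g_i = k_i·x_i + k_i·∑_{j=1}^{i−1}(1 − j/(2p−i))·g_j·x_{i−j} in ℂ[x_1, x_2, …]. Then for each 1 ≤ i ≤ p−1, the polynomial g_i satisfies (2p−i)x_i + ∑_{j=1}^{i−1}(2p−i−j)g_j·x_{i−j} + g_i·(2(p−i)·(−(p²−1)c_M/24) + ((p−i)³−(p−i))c_M/12) = 0. -/

import Mathlib

open MvPolynomial

/-- The recursively defined polynomials `g_i` in `ℂ[x_1, x_2, …]`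
(`X j` stands for `M_{-j}`):
`g_i = k_i·x_i + k_i·∑_{j=1}^{i−1}(1 − j/(2p−i))·g_j·x_{i−j}`
with `k_i = 12/(i(p−i)c_M)`. -/
noncomputable def gBMS (p : ℕ) (cM : ℂ) : ℕ → MvPolynomial ℕ ℂ
  | i =>
    MvPolynomial.C (12 / ((i : ℂ) * ((p : ℂ) - (i : ℂ)) * cM)) * MvPolynomial.X i +
      MvPolynomial.C (12 / ((i : ℂ) * ((p : ℂ) - (i : ℂ)) * cM)) *
        ∑ j ∈ (Finset.Icc 1 (i - 1)).attach,
          MvPolynomial.C (1 - (j.1 : ℂ) / (2 * (p : ℂ) - (i : ℂ))) * gBMS p cM j.1 *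
            MvPolynomial.X (i - j.1)
  termination_by i => i
  decreasing_by
    have hj := j.2
    simp only [Finset.mem_Icc] at hj
    omega

/-- For `p ≥ 2` and `1 ≤ i ≤ p−1`, the polynomial `g_i` satisfies
`(2p−i)x_i + ∑_{j=1}^{i−1}(2p−i−j)g_j·x_{i−j}
  + g_i·(2(p−i)·(−(p²−1)c_M/24) + ((p−i)³−(p−i))c_M/12) = 0`
(with `h_M = −(p²−1)c_M/24`). -/
theorem stmt16 (p : ℕ) (hp : 2 ≤ p) (cM : ℂ) (hc : cM ≠ 0)
    (i : ℕ) (h1 : 1 ≤ i) (h2 : i ≤ p - 1) :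
    MvPolynomial.C (2 * (p : ℂ) - (i : ℂ)) * MvPolynomial.X i
        + ∑ j ∈ Finset.Icc 1 (i - 1),
            MvPolynomial.C (2 * (p : ℂ) - (i : ℂ) - (j : ℂ)) * gBMS p cM j *
              MvPolynomial.X (i - j)
        + gBMS p cM i *
            MvPolynomial.C (2 * ((p : ℂ) - (i : ℂ)) * (-(((p : ℂ) ^ 2 - 1) * cM) / 24)
              + (((p : ℂ) - (i : ℂ)) ^ 3 - ((p : ℂ) - (i : ℂ))) * cM / 12) = 0 := by
  have hiC : (i:ℂ) ≠ 0 := Nat.cast_ne_zero.mpr (by omega)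
  have hpiC : (p:ℂ) - i ≠ 0 := by
    have h := Nat.cast_sub (R := ℂ) (show i ≤ p by omega)
    rw [← h]
    exact Nat.cast_ne_zero.mpr (by omega)
  have haC : 2*(p:ℂ) - i ≠ 0 := by
    have h : ((2*p - i : ℕ):ℂ) = 2*(p:ℂ) - i := by
      rw [Nat.cast_sub (show i ≤ 2*p by omega)]; push_cast; ring
    rw [← h]
    exact Nat.cast_ne_zero.mpr (by omega)
  set a : ℂ := 2*(p:ℂ) - i with ha
  set k : ℂ := 12 / ((i:ℂ) * ((p:ℂ) - i) * cM) with hk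
  set E : ℂ := 2*((p:ℂ)-i) * (-(((p:ℂ)^2 - 1)*cM)/24) + (((p:ℂ)-i)^3 - ((p:ℂ)-i)) * cM / 12 with hE
  have hkE : k * E = -a := by
    rw [hk, hE, ha]; field_simp; ring
  rw [gBMS]
  rw [Finset.sum_attach (Finset.Icc 1 (i-1))
    (fun j => C (1 - (j:ℂ)/(2*(p:ℂ) - (i:ℂ))) * gBMS p cM j * X (i - j))]
  rw [← hk, ← ha]
  clear_value a k E
  rw [show C a * X i
        + (∑ j ∈ Finset.Icc 1 (i-1), C (a - (j:ℂ)) * gBMS p cM j * X (i - j))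
        + (C k * X i + C k * ∑ j ∈ Finset.Icc 1 (i-1),
            C (1 - (j:ℂ)/a) * gBMS p cM j * X (i - j)) * C E
      = (C a * X i + C k * X i * C E)
        + ∑ j ∈ Finset.Icc 1 (i-1),
            (C (a - (j:ℂ)) * gBMS p cM j * X (i - j)
              + C k * (C (1 - (j:ℂ)/a) * gBMS p cM j * X (i - j)) * C E) from by
    rw [Finset.sum_add_distrib, Finset.mul_sum, add_mul, Finset.sum_mul]; ring]
  have main : ∀ j ∈ Finset.Icc 1 (i-1),
      C (a - (j:ℂ)) * gBMS p cM j * X (i - j)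
        + C k * (C (1 - (j:ℂ)/a) * gBMS p cM j * X (i - j)) * C E = 0 := by
    intro j _
    have hs : (a - (j:ℂ)) + k * (1 - (j:ℂ)/a) * E = 0 := by
      have h2 : k * (1 - (j:ℂ)/a) * E = (1 - (j:ℂ)/a) * (k*E) := by ring
      rw [h2, hkE]; field_simp; ring
    calc C (a - (j:ℂ)) * gBMS p cM j * X (i - j)
          + C k * (C (1 - (j:ℂ)/a) * gBMS p cM j * X (i - j)) * C E
        = C ((a - (j:ℂ)) + k * (1 - (j:ℂ)/a) * E) * (gBMS p cM j * X (i - j)) := by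
          rw [map_add, map_mul, map_mul]; ring
      _ = 0 := by rw [hs, map_zero, zero_mul]
  rw [Finset.sum_congr rfl main, Finset.sum_const_zero, add_zero]
  have hs0 : a + k * E = 0 := by rw [hkE]; ring
  calc C a * X i + C k * X i * C E = C (a + k*E) * X i := by rw [map_add, map_mul]; ring
    _ = 0 := by rw [hs0, map_zero, zero_mul]
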